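/- arXiv:2006.10853 — 2 statements merged into one kernel-verified Lean document; each statement's English description precedes it below -/
import Mathlib

section
/- For every integer K ≥ 1 and every real x, the partial Fourier sum of the half-wave rectified sine satisfies the uniform error bound |max(sin x, 0) − (1/π + (1/2)·sin x − (2/π)·Σ_{k=1}^{K} cos(2kx)/(4k² − 1))| ≤ 1/(π(2K + 1)). -/
/-!
Since `max (sin x) 0 = (sin x + |sin x|) / 2`, it suffices to expand `|sin x|`. As a `π`-periodic
function its Fourier coefficients are `2 / (π (1 - 4 n²))`, which are summable, so its Fourier
series converges pointwise: `|sin x| = 2 / π - (4 / π) ∑_{k ≥ 1} cos (2 k x) / (4 k² - 1)`.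
The error of the `K`-th partial sum is therefore `2 / π` times a tail of this series, which is
bounded termwise by the telescoping tail `∑_{k > K} 1 / (4 k² - 1) = 1 / (2 (2 K + 1))`.
-/

open Real Filter Topology

local instance : Fact (0 < π) := ⟨pi_pos⟩

lemma ofReal_abs_sin_periodic : Function.Periodic (fun x => ((|sin x| : ℝ) : ℂ)) π :=
  fun x => by simp [sin_add_pi]

noncomputable def absSinCircle : C(AddCircle π, ℂ) :=
  ⟨ofReal_abs_sin_periodic.lift, continuous_coinduced_dom.mpr
    (show Continuous fun x : ℝ => ((|sin x| : ℝ) : ℂ) by fun_prop)⟩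

lemma absSinCircle_coe (x : ℝ) : absSinCircle x = |sin x| :=
  ofReal_abs_sin_periodic.lift_coe x

lemma integral_exp_odd_mul_I (m : ℤ) :
    ∫ x in (0 : ℝ)..π, Complex.exp ((2 * m + 1) * Complex.I * x) =
      2 * Complex.I / (2 * m + 1) := by
  have hm : (2 * m + 1 : ℂ) ≠ 0 := by exact_mod_cast (by omega : 2 * m + 1 ≠ 0)
  have hexp : Complex.exp ((2 * m + 1) * Complex.I * π) = -1 := by
    rw [show (2 * m + 1) * Complex.I * π = m * (2 * π * Complex.I) + π * Complex.I by ring,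
      Complex.exp_add, Complex.exp_int_mul_two_pi_mul_I, Complex.exp_pi_mul_I, one_mul]
  rw [integral_exp_mul_complex (mul_ne_zero hm Complex.I_ne_zero), hexp]
  field_simp
  simp only [Complex.ofReal_zero, mul_zero, Complex.exp_zero, Complex.I_sq]
  ring

lemma integral_exp_mul_sin (n : ℤ) :
    ∫ x in (0 : ℝ)..π, Complex.exp (-(2 * n) * Complex.I * x) * Complex.sin x =
      2 / (1 - 4 * n ^ 2) := by
  have hsplit (x : ℝ) : Complex.exp (-(2 * n) * Complex.I * x) * Complex.sin x =
      Complex.I / 2 * (Complex.exp ((2 * (-n - 1 : ℤ) + 1) * Complex.I * x) -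
        Complex.exp ((2 * (-n : ℤ) + 1) * Complex.I * x)) := by
    have e₁ : Complex.exp (-(2 * n) * Complex.I * x) * Complex.exp (-x * Complex.I) =
        Complex.exp ((2 * (-n - 1 : ℤ) + 1) * Complex.I * x) := by
      rw [← Complex.exp_add]; push_cast; ring_nf
    have e₂ : Complex.exp (-(2 * n) * Complex.I * x) * Complex.exp (x * Complex.I) =
        Complex.exp ((2 * (-n : ℤ) + 1) * Complex.I * x) := by
      rw [← Complex.exp_add]; push_cast; ring_nf
    rw [Complex.sin]
    linear_combination (Complex.I / 2) * e₁ - (Complex.I / 2) * e₂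
  have h₁ : (2 * (-n - 1) + 1 : ℂ) ≠ 0 := by
    exact_mod_cast (by omega : 2 * (-n - 1) + 1 ≠ 0)
  have h₂ : (-(2 * n) + 1 : ℂ) ≠ 0 := by exact_mod_cast (by omega : -(2 * n) + 1 ≠ 0)
  have h₃ : (1 - n ^ 2 * 4 : ℂ) ≠ 0 := by
    rw [show (1 - n ^ 2 * 4 : ℂ) = -(2 * (-n - 1) + 1) * (-(2 * n) + 1) by ring]
    exact mul_ne_zero (neg_ne_zero.mpr h₁) h₂
  simp_rw [hsplit]
  rw [intervalIntegral.integral_const_mul,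
    intervalIntegral.integral_sub ((by fun_prop : Continuous _).intervalIntegrable _ _)
      ((by fun_prop : Continuous _).intervalIntegrable _ _),
    integral_exp_odd_mul_I, integral_exp_odd_mul_I]
  push_cast
  field_simp
  rw [Complex.I_sq]
  ring

lemma fourierCoeff_absSinCircle (n : ℤ) :
    fourierCoeff absSinCircle n = ((2 / (π * (1 - 4 * n ^ 2)) : ℝ) : ℂ) := by
  have hintegrand : Set.EqOn (fun x : ℝ => fourier (-n) (x : AddCircle π) • absSinCircle x)
      (fun x : ℝ => Complex.exp (-(2 * n) * Complex.I * x) * Complex.sin x) (Set.uIcc 0 π) := by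
    intro x hx
    rw [Set.uIcc_of_le pi_pos.le] at hx
    simp only [smul_eq_mul, fourier_coe_apply, absSinCircle_coe]
    rw [abs_of_nonneg (sin_nonneg_of_nonneg_of_le_pi hx.1 hx.2), Complex.ofReal_sin]
    congr 2
    field_simp
    push_cast
    ring
  rw [fourierCoeff_eq_intervalIntegral _ n 0, zero_add, intervalIntegral.integral_congr hintegrand,
    integral_exp_mul_sin, Complex.real_smul]
  push_cast
  field_simp

lemma summable_two_div_pi_mul_one_sub_four_mul_sq :
    Summable fun n : ℤ => 2 / (π * (1 - 4 * (n : ℝ) ^ 2)) := by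
  refine Summable.of_norm_bounded_eventually (Real.summable_one_div_int_pow.mpr one_lt_two) ?_
  filter_upwards [eventually_cofinite_ne 0] with n hn
  have hn : (1 : ℝ) ≤ (n : ℝ) ^ 2 := by
    have : (0 : ℤ) < n ^ 2 := by positivity
    exact_mod_cast (by linarith : (1 : ℤ) ≤ n ^ 2)
  rw [Real.norm_eq_abs, abs_div, abs_of_pos two_pos, abs_mul, abs_of_pos pi_pos,
    abs_of_neg (by linarith), div_le_div_iff₀ (by nlinarith [pi_pos]) (by positivity)]
  nlinarith [pi_gt_three]

lemma hasSum_int_abs_sin (x : ℝ) :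
    HasSum (fun n : ℤ => 2 / (π * (1 - 4 * n ^ 2)) * cos (2 * n * x)) |sin x| := by
  have hsum : Summable (fourierCoeff absSinCircle) := by
    rw [funext fourierCoeff_absSinCircle]
    exact Complex.summable_ofReal.mpr summable_two_div_pi_mul_one_sub_four_mul_sq
  have h := Complex.hasSum_re (has_pointwise_sum_fourier_series_of_summable hsum x)
  rw [absSinCircle_coe, Complex.ofReal_re] at h
  convert h using 2 with n
  rw [fourierCoeff_absSinCircle, fourier_coe_apply, smul_eq_mul, Complex.re_ofReal_mul,
    show 2 * π * Complex.I * n * x / π = ((2 * n * x : ℝ) : ℂ) * Complex.I by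
      push_cast; field_simp, Complex.exp_ofReal_mul_I_re]

lemma hasSum_cos_div_four_mul_sq_sub_one (x : ℝ) :
    HasSum (fun k : ℕ => cos (2 * (k + 1) * x) / (4 * ((k : ℝ) + 1) ^ 2 - 1))
      (1 / 2 - π / 4 * |sin x|) := by
  have h := ((hasSum_nat_add_iff' 1).mpr (hasSum_int_abs_sin x).nat_add_neg).mul_left (-(π / 4))
  convert h using 2 with k
  · rfl
  · have hk : 0 < 4 * ((k : ℝ) + 1) ^ 2 - 1 := by nlinarith [k.cast_nonneg (α := ℝ)]
    push_cast
    simp only [mul_neg, neg_mul, cos_neg, neg_sq]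
    rw [show 1 - 4 * ((k : ℝ) + 1) ^ 2 = -(4 * ((k : ℝ) + 1) ^ 2 - 1) by ring]
    field_simp
    ring
  · norm_num
    field_simp
    ring

lemma hasSum_sub_succ_of_antitone {f : ℕ → ℝ} (hf : Antitone f) {l : ℝ}
    (hl : Tendsto f atTop (𝓝 l)) : HasSum (fun n => f n - f (n + 1)) (f 0 - l) := by
  rw [hasSum_iff_tendsto_nat_of_nonneg fun n => sub_nonneg.mpr (hf n.le_succ)]
  simp_rw [Finset.sum_range_sub']
  exact hl.const_sub _

lemma hasSum_one_div_four_mul_sq_sub_one_nat_add (K : ℕ) :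
    HasSum (fun n : ℕ => 1 / (4 * (((n + K : ℕ) : ℝ) + 1) ^ 2 - 1))
      (1 / (2 * (2 * K + 1)) : ℝ) := by
  set f : ℕ → ℝ := fun n => 1 / (2 * (2 * ((n + K : ℕ) : ℝ) + 1))
  have hf : Antitone f := fun a b hab => by
    simp only [f]
    gcongr
  have hl : Tendsto f atTop (𝓝 0) := by
    refine tendsto_const_nhds.div_atTop
      (tendsto_atTop_mono (fun n => ?_) tendsto_natCast_atTop_atTop)
    push_cast
    linarith [K.cast_nonneg (α := ℝ)]
  convert hasSum_sub_succ_of_antitone hf hl using 2 with n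
  · have h₁ : (0 : ℝ) < 2 * (n + K) + 1 := by positivity
    have h₂ : (0 : ℝ) < 2 * (n + K) + 3 := by positivity
    simp only [f]
    push_cast
    rw [show 4 * ((n : ℝ) + K + 1) ^ 2 - 1 = (2 * (n + K) + 1) * (2 * (n + K) + 3) by ring,
      show 2 * ((n : ℝ) + 1 + K) + 1 = 2 * (n + K) + 3 by ring]
    field_simp
    ring
  · simp [f]

theorem relu_sin_partial_sum_error_general (K : ℕ) (x : ℝ) :
    |max (Real.sin x) 0 -
        (1 / Real.pi + (1 / 2) * Real.sin x -
          (2 / Real.pi) *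
            ∑ k ∈ Finset.range K,
              Real.cos (2 * (k + 1) * x) / (4 * ((k : ℝ) + 1) ^ 2 - 1))| ≤
      1 / (Real.pi * (2 * K + 1)) := by
  set P := ∑ k ∈ Finset.range K, cos (2 * (k + 1) * x) / (4 * ((k : ℝ) + 1) ^ 2 - 1)
  have htail : |(1 / 2 - π / 4 * |sin x|) - P| ≤ 1 / (2 * (2 * K + 1)) := by
    refine ((hasSum_nat_add_iff' K).mpr (hasSum_cos_div_four_mul_sq_sub_one x)).norm_le_of_bounded
      (hasSum_one_div_four_mul_sq_sub_one_nat_add K) fun n => ?_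
    have hpos : 0 < 4 * (((n + K : ℕ) : ℝ) + 1) ^ 2 - 1 := by
      nlinarith [(n + K).cast_nonneg (α := ℝ)]
    rw [Real.norm_eq_abs, abs_div, abs_of_pos hpos]
    exact div_le_div_of_nonneg_right (abs_cos_le_one _) hpos.le
  have hmax : max (sin x) 0 = (sin x + |sin x|) / 2 := by
    linarith [max_zero_add_max_neg_zero_eq_abs_self (sin x),
      max_zero_sub_max_neg_zero_eq_self (sin x)]
  have herr : max (sin x) 0 - (1 / π + 1 / 2 * sin x - 2 / π * P) =
      2 / π * (P - (1 / 2 - π / 4 * |sin x|)) := by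
    rw [hmax]
    field_simp
    ring
  rw [herr, abs_mul, abs_of_pos (by positivity), abs_sub_comm]
  calc 2 / π * |(1 / 2 - π / 4 * |sin x|) - P| ≤ 2 / π * (1 / (2 * (2 * K + 1))) := by gcongr
    _ = 1 / (π * (2 * K + 1)) := by field_simp

/-- Uniform error bound for the truncated Fourier expansion of the half-wave rectified
sine: for every `K ≥ 1` and every real `x`,
`|max(sin x, 0) − (1/π + (1/2)·sin x − (2/π)·Σ_{k=1}^{K} cos(2kx)/(4k² − 1))|
  ≤ 1/(π(2K + 1))`. -/
theorem relu_sin_partial_sum_error (K : ℕ) (hK : 1 ≤ K) (x : ℝ) :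
    |max (Real.sin x) 0 -
        (1 / Real.pi + (1 / 2) * Real.sin x -
          (2 / Real.pi) *
            ∑ k ∈ Finset.range K,
              Real.cos (2 * (k + 1) * x) / (4 * ((k : ℝ) + 1) ^ 2 - 1))| ≤
      1 / (Real.pi * (2 * K + 1)) :=
  relu_sin_partial_sum_error_general K x
end

section
/- Let B > 0 and Fs > 2B. Suppose f, g : ℝ → ℂ are continuous and integrable, their Fourier transforms 𝓕f and 𝓕g are integrable and supported in the interval [−B, B], and f(n/Fs) = g(n/Fs) for every integer n. Then f = g. -/
/-!
The difference `h = f - g` has a Fourier transform `F` supported in `[-B, B]`, which lies inside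
the interval `(-Fs/2, Fs/2]` of length `Fs`. Viewing `F` as a function on the circle `ℝ / Fs ℤ`,
its Fourier coefficients are `𝓕 F (n / Fs) / Fs = h (-n / Fs) / Fs` by Fourier inversion, so they
all vanish; by Parseval `F = 0` almost everywhere, and inverting once more gives `h = 0`.
-/

open MeasureTheory Set FourierTransform

theorem Real.fourier_sub {E : Type*} [NormedAddCommGroup E] [NormedSpace ℂ E] {f g : ℝ → E}
    (hf : Integrable f) (hg : Integrable g) : 𝓕 (f - g) = 𝓕 f - 𝓕 g := by
  ext w
  simp only [Real.fourier_eq, Pi.sub_apply, smul_sub]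
  exact integral_sub ((Real.fourierIntegral_convergent_iff w).2 hf)
    ((Real.fourierIntegral_convergent_iff w).2 hg)

theorem ae_restrict_eq_zero_of_fourierCoeffOn_eq_zero {a b : ℝ} (hab : a < b) {f : ℝ → ℂ}
    (hf : MemLp f 2 (volume.restrict (Ioc a b))) (hcoeff : ∀ n, fourierCoeffOn hab f n = 0) :
    f =ᵐ[volume.restrict (Ioc a b)] 0 := by
  have hnorm : ∫ x in a..b, ‖f x‖ ^ 2 = 0 := by
    have hparseval := hasSum_sq_fourierCoeffOn hab hf
    simp only [hcoeff, norm_zero, ne_eq, OfNat.ofNat_ne_zero, not_false_eq_true, zero_pow]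
      at hparseval
    exact (smul_eq_zero.mp (hasSum_zero.unique hparseval).symm).resolve_left
      (inv_ne_zero (sub_ne_zero.2 hab.ne'))
  rw [intervalIntegral.integral_of_le hab.le,
    integral_eq_zero_iff_of_nonneg (fun _ ↦ by positivity) (hf.integrable_norm_pow two_ne_zero)]
    at hnorm
  filter_upwards [hnorm] with x hx
  simpa using hx

theorem fourierCoeffOn_eq_smul_fourier {E : Type*} [NormedAddCommGroup E] [NormedSpace ℂ E]
    {a b : ℝ} (hab : a < b) {f : ℝ → E} (hf : ∀ x ∉ Ioc a b, f x = 0) (n : ℤ) :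
    fourierCoeffOn hab f n = (1 / (b - a)) • 𝓕 f (n / (b - a)) := by
  rw [fourierCoeffOn_eq_integral, intervalIntegral.integral_of_le hab.le,
    setIntegral_eq_integral_of_forall_compl_eq_zero (fun x hx ↦ by rw [hf x hx, smul_zero]),
    Real.fourier_real_eq]
  congr 2 with x
  rw [Circle.smul_def, fourier_coe_apply, Real.fourierChar_apply]
  congr 2
  push_cast
  ring

theorem ae_eq_zero_of_fourier_intCast_div_eq_zero {a T : ℝ} (hT : 0 < T) {f : ℝ → ℂ}
    (hf : MemLp f 2 (volume.restrict (Ioc a (a + T))))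
    (hsupp : Function.support f ⊆ Ioc a (a + T)) (hfourier : ∀ n : ℤ, 𝓕 f (n / T) = 0) :
    f =ᵐ[volume] 0 := by
  have hab : a < a + T := lt_add_of_pos_right a hT
  rw [Function.support_subset_iff'] at hsupp
  have hcoeff (n : ℤ) : fourierCoeffOn hab f n = 0 := by
    rw [fourierCoeffOn_eq_smul_fourier hab hsupp, add_sub_cancel_left, hfourier, smul_zero]
  have hIoc := (ae_restrict_iff' measurableSet_Ioc).1
    (ae_restrict_eq_zero_of_fourierCoeffOn_eq_zero hab hf hcoeff)
  filter_upwards [hIoc] with x hx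
  by_cases hmem : x ∈ Ioc a (a + T)
  · exact hx hmem
  · exact hsupp x hmem

/-- **Nyquist–Shannon sampling theorem (uniqueness form)**: two continuous integrable
signals that are bandlimited to `[−B, B]` (their integrable Fourier transforms vanish
outside `[−B, B]`) and agree on the samples `n / Fs`, for a sampling rate `Fs > 2B`,
are equal. -/
theorem nyquist_shannon_uniqueness (B Fs : ℝ) (hB : 0 < B) (hFs : 2 * B < Fs)
    (f g : ℝ → ℂ) (hfc : Continuous f) (hgc : Continuous g)
    (hfi : Integrable f) (hgi : Integrable g)
    (hFfi : Integrable (FourierTransform.fourier f))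
    (hFgi : Integrable (FourierTransform.fourier g))
    (hFf : ∀ ω : ℝ, ω ∉ Set.Icc (-B) B → FourierTransform.fourier f ω = 0)
    (hFg : ∀ ω : ℝ, ω ∉ Set.Icc (-B) B → FourierTransform.fourier g ω = 0)
    (hsample : ∀ n : ℤ, f ((n : ℝ) / Fs) = g ((n : ℝ) / Fs)) :
    f = g := by
  have hF : 𝓕 (f - g) = 𝓕 f - 𝓕 g := Real.fourier_sub hfi hgi
  have hinv : 𝓕⁻ (𝓕 (f - g)) = f - g :=
    (hfc.sub hgc).fourierInv_fourier_eq (hfi.sub hgi) (hF ▸ hFfi.sub hFgi)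
  have hband : Function.support (𝓕 (f - g)) ⊆ Icc (-B) B := by
    rw [Function.support_subset_iff']
    intro ω hω
    rw [hF, Pi.sub_apply, hFf ω hω, hFg ω hω, sub_zero]
  have hcont : Continuous (𝓕 (f - g)) := VectorFourier.fourierIntegral_continuous
    Real.continuous_fourierChar (innerSL ℝ).continuous₂ (hfi.sub hgi)
  have hL2 : MemLp (𝓕 (f - g)) 2 (volume.restrict (Ioc (-(Fs / 2)) (-(Fs / 2) + Fs))) :=
    (hcont.memLp_of_hasCompactSupport (.intro isCompact_Icc fun ω hω ↦
      Function.notMem_support.1 (hω ∘ (hband ·)))).restrict _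
  have hsamples (n : ℤ) : 𝓕 (𝓕 (f - g)) (n / Fs) = 0 := by
    rw [← neg_neg ((n : ℝ) / Fs), ← Real.fourierInv_eq_fourier_neg, hinv, Pi.sub_apply,
      sub_eq_zero, ← neg_div, ← Int.cast_neg]
    exact hsample (-n)
  have hzero := ae_eq_zero_of_fourier_intCast_div_eq_zero (by linarith) hL2
    (hband.trans fun ω hω ↦ ⟨by linarith [hω.1], by linarith [hω.2]⟩) hsamples
  rw [← sub_eq_zero, ← hinv]
  ext x
  rw [Real.fourierInv_congr_ae hzero x]
  simp [Real.fourierInv_eq]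
end
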